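/- If C is a strongly connected component in PA*01 and C has an alive exit state, then C has a maximal alive exit state, i.e. an alive exit state s ∈ C such that for every alive exit state s' ∈ C and every normed exit transition e' ∈ Extⁿ(s') there exists e ∈ Extⁿ(s) with e ∼ e'. -/

import Mathlib

/-- PA*01 expressions over an action set `Act`. -/
inductive PExpr (Act : Type) : Type
  | dl : PExpr Act
  | emp : PExpr Act
  | act : Act → PExpr Act
  | seq : PExpr Act → PExpr Act → PExpr Act
  | alt : PExpr Act → PExpr Act → PExpr Act
  | star : PExpr Act → PExpr Act
  | par : PExpr Act → PExpr Act → PExpr Act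

variable {Act : Type}

/-- The termination predicate `↓` of PA*01. -/
inductive PTerm : PExpr Act → Prop
  | emp : PTerm PExpr.emp
  | altl {p q : PExpr Act} : PTerm p → PTerm (PExpr.alt p q)
  | altr {p q : PExpr Act} : PTerm q → PTerm (PExpr.alt p q)
  | seq {p q : PExpr Act} : PTerm p → PTerm q → PTerm (PExpr.seq p q)
  | star {p : PExpr Act} : PTerm (PExpr.star p)
  | par {p q : PExpr Act} : PTerm p → PTerm q → PTerm (PExpr.par p q)

/-- The transition relation `p →a p'` of PA*01 (pure interleaving). -/
inductive PStep : PExpr Act → Act → PExpr Act → Prop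
  | act {a : Act} : PStep (PExpr.act a) a PExpr.emp
  | altl {p q p' : PExpr Act} {a : Act} : PStep p a p' → PStep (PExpr.alt p q) a p'
  | altr {p q q' : PExpr Act} {a : Act} : PStep q a q' → PStep (PExpr.alt p q) a q'
  | seql {p q p' : PExpr Act} {a : Act} :
      PStep p a p' → PStep (PExpr.seq p q) a (PExpr.seq p' q)
  | seqr {p q q' : PExpr Act} {a : Act} :
      PTerm p → PStep q a q' → PStep (PExpr.seq p q) a q'
  | star {p p' : PExpr Act} {a : Act} :
      PStep p a p' → PStep (PExpr.star p) a (PExpr.seq p' (PExpr.star p))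
  | parl {p q p' : PExpr Act} {a : Act} :
      PStep p a p' → PStep (PExpr.par p q) a (PExpr.par p' q)
  | parr {p q q' : PExpr Act} {a : Act} :
      PStep q a q' → PStep (PExpr.par p q) a (PExpr.par p q')

/-- `p → p'`: a transition with some label. -/
def PStepAny (p q : PExpr Act) : Prop := ∃ a, PStep p a q

/-- `p →* p'`: reachability. -/
def PReach (p q : PExpr Act) : Prop := Relation.ReflTransGen PStepAny p q

/-- `p` is normed: some terminating expression is reachable from `p`. -/
def PNormed (p : PExpr Act) : Prop := ∃ q, PReach p q ∧ PTerm q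

/-- A strongly connected component: a maximal set of mutually reachable states. -/
def IsSCC (C : Set (PExpr Act)) : Prop :=
  (∀ s ∈ C, ∀ t ∈ C, PReach s t) ∧
    ∀ D : Set (PExpr Act), C ⊆ D → (∀ s ∈ D, ∀ t ∈ D, PReach s t) → D = C

/-- A trivial SCC: a singleton `{s}` with no transition `s → s`. -/
def IsTrivialSCC (C : Set (PExpr Act)) : Prop := ∃ s, C = {s} ∧ ¬ PStepAny s s

/-- `C · q = { p · q | p ∈ C }`. -/
def seqSet (C : Set (PExpr Act)) (q : PExpr Act) : Set (PExpr Act) :=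
  (fun p => PExpr.seq p q) '' C

/-- `C₁ ‖ C₂ = { p ‖ q | p ∈ C₁, q ∈ C₂ }`. -/
def parSet (C₁ C₂ : Set (PExpr Act)) : Set (PExpr Act) :=
  Set.image2 PExpr.par C₁ C₂

/-- A basic SCC: `C = C' · q*` for some set `C'` that is not an SCC. -/
def IsBasic (C : Set (PExpr Act)) : Prop :=
  ∃ (C' : Set (PExpr Act)) (q : PExpr Act), C = seqSet C' (PExpr.star q) ∧ ¬ IsSCC C'

/-- The set `Extⁿ(s)` of normed exit transitions from `s`, w.r.t. the SCC `C`. -/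
def ExtN (C : Set (PExpr Act)) (s : PExpr Act) : Set (Act × PExpr Act) :=
  {e | PStep s e.1 e.2 ∧ e.2 ∉ C ∧ PNormed e.2}

/-- `s ∈ C` is an alive exit state if `s↓` or `s` has a normed exit transition. -/
def AliveExit (C : Set (PExpr Act)) (s : PExpr Act) : Prop :=
  s ∈ C ∧ (PTerm s ∨ ∃ e, e ∈ ExtN C s)

/-- `E · q = { (a, r · q) | (a, r) ∈ E }`. -/
def extSeq (E : Set (Act × PExpr Act)) (q : PExpr Act) : Set (Act × PExpr Act) :=
  (fun e => (e.1, PExpr.seq e.2 q)) '' E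

/-- `E ‖ q = { (a, r ‖ q) | (a, r) ∈ E }`. -/
def extParL (E : Set (Act × PExpr Act)) (q : PExpr Act) : Set (Act × PExpr Act) :=
  (fun e => (e.1, PExpr.par e.2 q)) '' E

/-- `p ‖ E = { (a, p ‖ r) | (a, r) ∈ E }`. -/
def extParR (p : PExpr Act) (E : Set (Act × PExpr Act)) : Set (Act × PExpr Act) :=
  (fun e => (e.1, PExpr.par p e.2)) '' E

/-- `s` and `s'` belong to the same strongly connected component. -/
def SameSCC (s s' : PExpr Act) : Prop := ∃ C : Set (PExpr Act), IsSCC C ∧ s ∈ C ∧ s' ∈ C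

/-- The equivalence `∼` on exit transitions: same action, targets in the same SCC. -/
def ExitEquiv (e e' : Act × PExpr Act) : Prop := e.1 = e'.1 ∧ SameSCC e.2 e'.2

/-- Is the expression a star expression? -/
def isStarP : PExpr Act → Bool
  | PExpr.star _ => true
  | _ => false

/-- The measure `OC` on PA*01 expressions. -/
def OC : PExpr Act → ℕ
  | PExpr.dl => 0
  | PExpr.emp => 0
  | PExpr.act _ => 1
  | PExpr.seq _ q => if isStarP q then 0 else OC q + 1
  | PExpr.alt p q => max (OC p) (OC q) + 1
  | PExpr.star _ => 1
  | PExpr.par _ _ => 0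

/-- A PA*01 expression without occurrences of `‖` is a BPA*01 expression. -/
def NoPar : PExpr Act → Prop
  | PExpr.dl => True
  | PExpr.emp => True
  | PExpr.act _ => True
  | PExpr.seq p q => NoPar p ∧ NoPar q
  | PExpr.alt p q => NoPar p ∧ NoPar q
  | PExpr.star p => NoPar p
  | PExpr.par _ _ => False

/-- Bisimulations on PA*01 expressions. -/
def IsBisimulation (R : PExpr Act → PExpr Act → Prop) : Prop :=
  ∀ p q, R p q →
    (∀ a p', PStep p a p' → ∃ q', PStep q a q' ∧ R p' q') ∧
    (∀ a q', PStep q a q' → ∃ p', PStep p a p' ∧ R p' q') ∧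
    (PTerm p ↔ PTerm q)

/-- Bisimilarity of PA*01 expressions. -/
def Bisimilar (p q : PExpr Act) : Prop :=
  ∃ R : PExpr Act → PExpr Act → Prop, IsBisimulation R ∧ R p q

/-!
Strengthen the claim: the SCC `sccOf x` of any normed `x` has a state that covers all normed
exits and terminates as soon as some state of the component does (`IsMaximalExit`, which does
not ask for aliveness; such a state is alive whenever some state is). Induct on `x`. The SCC of
`p ‖ q` is the product of the SCCs of `p` and `q`, and that of `p · q` is `sccOf p · q` unless
`q` leads back into it; in both cases composing maximal states gives a maximal state, the exits
of a terminated `r · q` through `q` being matched thanks to the termination clause. If `q` leads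
back into `sccOf (p · q)` then `q = t*`, since otherwise the measure `OC` would drop, and every
normed `w · t*` can restart `t*` and return: that SCC has no normed exits, and any terminating
state is maximal. The remaining expressions are not targets of transitions or have none, so
their SCCs are singletons.
-/

open PExpr

theorem pTerm_seq_iff {p q : PExpr Act} : PTerm (seq p q) ↔ PTerm p ∧ PTerm q :=
  ⟨fun | .seq hp hq => ⟨hp, hq⟩, fun ⟨hp, hq⟩ => .seq hp hq⟩

theorem pTerm_par_iff {p q : PExpr Act} : PTerm (par p q) ↔ PTerm p ∧ PTerm q :=
  ⟨fun | .par hp hq => ⟨hp, hq⟩, fun ⟨hp, hq⟩ => .par hp hq⟩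

theorem pStep_seq_iff {p q x : PExpr Act} {a : Act} :
    PStep (seq p q) a x ↔
      (∃ p', x = seq p' q ∧ PStep p a p') ∨ (PTerm p ∧ PStep q a x) := by
  constructor
  · intro h
    cases h with
    | seql h => exact .inl ⟨_, rfl, h⟩
    | seqr hp hq => exact .inr ⟨hp, hq⟩
  · rintro (⟨p', rfl, h⟩ | ⟨hp, hq⟩)
    exacts [.seql h, .seqr hp hq]

theorem pStep_par_iff {p q x : PExpr Act} {a : Act} :
    PStep (par p q) a x ↔
      (∃ p', x = par p' q ∧ PStep p a p') ∨ (∃ q', x = par p q' ∧ PStep q a q') := by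
  constructor
  · intro h
    cases h with
    | parl h => exact .inl ⟨_, rfl, h⟩
    | parr h => exact .inr ⟨_, rfl, h⟩
  · rintro (⟨p', rfl, h⟩ | ⟨q', rfl, h⟩)
    exacts [.parl h, .parr h]

theorem pStep_star_iff {t x : PExpr Act} {a : Act} :
    PStep (star t) a x ↔ ∃ t', x = seq t' (star t) ∧ PStep t a t' :=
  ⟨fun | .star h => ⟨_, rfl, h⟩, fun ⟨_, hx, h⟩ => hx ▸ .star h⟩

theorem PStep.target_shape {p x : PExpr Act} {a : Act} (h : PStep p a x) :
    x = emp ∨ (∃ u v, x = seq u v) ∨ ∃ u v, x = par u v := by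
  induction h with
  | act => exact .inl rfl
  | altl _ ih | altr _ ih | seqr _ _ ih => exact ih
  | seql | star => exact .inr (.inl ⟨_, _, rfl⟩)
  | parl | parr => exact .inr (.inr ⟨_, _, rfl⟩)

theorem PReach.refl (p : PExpr Act) : PReach p p := Relation.ReflTransGen.refl

theorem PReach.trans {p q r : PExpr Act} (h : PReach p q) (h' : PReach q r) : PReach p r :=
  Relation.ReflTransGen.trans h h'

theorem PReach.single {p q : PExpr Act} {a : Act} (h : PStep p a q) : PReach p q :=
  Relation.ReflTransGen.single ⟨a, h⟩

theorem PReach.seq_left {p p' : PExpr Act} (q : PExpr Act) (h : PReach p p') :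
    PReach (seq p q) (seq p' q) :=
  Relation.ReflTransGen.lift (seq · q) (fun _ _ ⟨a, h⟩ => ⟨a, .seql h⟩) _ _ h

theorem PReach.par_left {p p' : PExpr Act} (q : PExpr Act) (h : PReach p p') :
    PReach (par p q) (par p' q) :=
  Relation.ReflTransGen.lift (par · q) (fun _ _ ⟨a, h⟩ => ⟨a, .parl h⟩) _ _ h

theorem PReach.par_right (p : PExpr Act) {q q' : PExpr Act} (h : PReach q q') :
    PReach (par p q) (par p q') :=
  Relation.ReflTransGen.lift (par p ·) (fun _ _ ⟨a, h⟩ => ⟨a, .parr h⟩) _ _ h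

theorem PReach.par_inv {p q y : PExpr Act} (h : PReach (par p q) y) :
    ∃ p' q', y = par p' q' ∧ PReach p p' ∧ PReach q q' := by
  induction h with
  | refl => exact ⟨p, q, rfl, .refl p, .refl q⟩
  | tail _ hstep ih =>
    obtain ⟨p', q', rfl, hp, hq⟩ := ih
    obtain ⟨a, ha⟩ := hstep
    rcases pStep_par_iff.1 ha with ⟨p'', rfl, h⟩ | ⟨q'', rfl, h⟩
    · exact ⟨p'', q', rfl, hp.trans (.single h), hq⟩
    · exact ⟨p', q'', rfl, hp, hq.trans (.single h)⟩

theorem PReach.seq_inv {p q y : PExpr Act} (h : PReach (seq p q) y) :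
    (∃ r, y = seq r q ∧ PReach p r) ∨
      ∃ r a z, PReach p r ∧ PTerm r ∧ PStep q a z ∧ PReach z y := by
  induction h with
  | refl => exact .inl ⟨p, rfl, .refl p⟩
  | tail _ hstep ih =>
    obtain ⟨b, hb⟩ := hstep
    rcases ih with ⟨r, rfl, hr⟩ | ⟨r, a, z, hr, ht, hz, hzy⟩
    · rcases pStep_seq_iff.1 hb with ⟨r', rfl, hr'⟩ | ⟨ht, hz⟩
      · exact .inl ⟨r', rfl, hr.trans (.single hr')⟩
      · exact .inr ⟨r, b, _, hr, ht, hz, .refl _⟩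
    · exact .inr ⟨r, a, z, hr, ht, hz, hzy.trans (.single hb)⟩

theorem PReach.seq_star_inv {p t y : PExpr Act} (h : PReach (seq p (star t)) y) :
    ∃ r, y = seq r (star t) := by
  induction h with
  | refl => exact ⟨p, rfl⟩
  | tail _ hstep ih =>
    obtain ⟨r, rfl⟩ := ih
    obtain ⟨b, hb⟩ := hstep
    rcases pStep_seq_iff.1 hb with ⟨r', rfl, -⟩ | ⟨-, hq⟩
    · exact ⟨r', rfl⟩
    · obtain ⟨t', rfl, -⟩ := pStep_star_iff.1 hq
      exact ⟨t', rfl⟩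

theorem PNormed.of_term {p : PExpr Act} (h : PTerm p) : PNormed p := ⟨p, .refl p, h⟩

theorem pNormed_seq_iff {p q : PExpr Act} : PNormed (seq p q) ↔ PNormed p ∧ PNormed q := by
  constructor
  · rintro ⟨y, hy, hyt⟩
    rcases hy.seq_inv with ⟨r, rfl, hr⟩ | ⟨r, a, z, hr, ht, hz, hzy⟩
    · obtain ⟨hrt, hqt⟩ := pTerm_seq_iff.1 hyt
      exact ⟨⟨r, hr, hrt⟩, .of_term hqt⟩
    · exact ⟨⟨r, hr, ht⟩, ⟨y, (PReach.single hz).trans hzy, hyt⟩⟩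
  · rintro ⟨⟨r, hr, hrt⟩, ⟨y, hy, hyt⟩⟩
    rcases hy.cases_head with rfl | ⟨z, ⟨a, hz⟩, hzy⟩
    · exact ⟨seq r q, hr.seq_left q, .seq hrt hyt⟩
    · exact ⟨y, (hr.seq_left q).trans ((PReach.single (.seqr hrt hz)).trans hzy), hyt⟩

theorem pNormed_par_iff {p q : PExpr Act} : PNormed (par p q) ↔ PNormed p ∧ PNormed q := by
  constructor
  · rintro ⟨y, hy, hyt⟩
    obtain ⟨p', q', rfl, hp, hq⟩ := hy.par_inv
    obtain ⟨hpt, hqt⟩ := pTerm_par_iff.1 hyt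
    exact ⟨⟨p', hp, hpt⟩, ⟨q', hq, hqt⟩⟩
  · rintro ⟨⟨p', hp, hpt⟩, ⟨q', hq, hqt⟩⟩
    exact ⟨par p' q', (hp.par_left q).trans (hq.par_right p'), .par hpt hqt⟩

theorem AliveExit.normed {C : Set (PExpr Act)} {s : PExpr Act} (h : AliveExit C s) :
    PNormed s := by
  rcases h.2 with ht | ⟨e, hstep, -, ⟨y, hy, hyt⟩⟩
  · exact .of_term ht
  · exact ⟨y, (PReach.single hstep).trans hy, hyt⟩

theorem PNormed.reach_restart {w t t₀ : PExpr Act} {a : Act} (hw : PNormed (seq w (star t)))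
    (ht : PStep t a t₀) : PReach (seq w (star t)) (seq t₀ (star t)) := by
  obtain ⟨y, hy, hyt⟩ := hw
  obtain ⟨w', rfl⟩ := hy.seq_star_inv
  exact hy.trans (.single (.seqr (pTerm_seq_iff.1 hyt).1 (.star ht)))

theorem OC_seq_of_isStarP_eq_false {q : PExpr Act} (hq : isStarP q = false) (p : PExpr Act) :
    OC (seq p q) = OC q + 1 := by
  simp [OC, hq]

theorem OC_le_of_pStep {p x : PExpr Act} {a : Act} (h : PStep p a x) : OC x ≤ OC p := by
  induction h with
  | act | seql | star | parl | parr => simp [OC, isStarP]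
  | altl _ ih | altr _ ih => simp only [OC]; omega
  | @seqr p q q' a _ hq ih =>
    cases q with
    | star t =>
      obtain ⟨t', rfl, -⟩ := pStep_star_iff.1 hq
      simp [OC, isStarP]
    | _ => rw [OC_seq_of_isStarP_eq_false rfl]; omega

theorem OC_le_of_pReach {p q : PExpr Act} (h : PReach p q) : OC q ≤ OC p := by
  induction h with
  | refl => exact le_rfl
  | tail _ hstep ih =>
    obtain ⟨a, ha⟩ := hstep
    exact (OC_le_of_pStep ha).trans ih

def sccOf (p : PExpr Act) : Set (PExpr Act) := {x | PReach p x ∧ PReach x p}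

theorem mem_sccOf_self (p : PExpr Act) : p ∈ sccOf p := ⟨.refl p, .refl p⟩

theorem isSCC_sccOf (p : PExpr Act) : IsSCC (sccOf p) := by
  refine ⟨fun s ⟨_, hsp⟩ t ⟨hpt, _⟩ => hsp.trans hpt, fun D hsub hD => ?_⟩
  have hp := hsub (mem_sccOf_self p)
  exact hsub.antisymm' fun d hd => ⟨hD p hp d hd, hD d hd p hp⟩

theorem IsSCC.eq_sccOf {C : Set (PExpr Act)} {s : PExpr Act} (hC : IsSCC C) (hs : s ∈ C) :
    C = sccOf s :=
  (hC.2 (sccOf s) (fun t ht => ⟨hC.1 s hs t ht, hC.1 t ht s hs⟩) (isSCC_sccOf s).1).symm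

theorem IsSCC.sameSCC {C : Set (PExpr Act)} {s t : PExpr Act} (hC : IsSCC C) (hs : s ∈ C)
    (ht : t ∈ C) : SameSCC s t :=
  ⟨C, hC, hs, ht⟩

theorem sameSCC_iff {x y : PExpr Act} : SameSCC x y ↔ PReach x y ∧ PReach y x :=
  ⟨fun ⟨_, hC, hx, hy⟩ => ⟨hC.1 x hx y hy, hC.1 y hy x hx⟩,
    fun h => (isSCC_sccOf x).sameSCC (mem_sccOf_self x) h⟩

theorem SameSCC.refl (x : PExpr Act) : SameSCC x x := sameSCC_iff.2 ⟨.refl x, .refl x⟩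

theorem SameSCC.seq_left {u u' : PExpr Act} (q : PExpr Act) (h : SameSCC u u') :
    SameSCC (seq u q) (seq u' q) :=
  have h := sameSCC_iff.1 h
  sameSCC_iff.2 ⟨h.1.seq_left q, h.2.seq_left q⟩

theorem SameSCC.par {u u' v v' : PExpr Act} (hu : SameSCC u u') (hv : SameSCC v v') :
    SameSCC (par u v) (par u' v') :=
  have hu := sameSCC_iff.1 hu
  have hv := sameSCC_iff.1 hv
  sameSCC_iff.2 ⟨(hu.1.par_left v).trans (hv.1.par_right u'),
    (hu.2.par_left v').trans (hv.2.par_right u)⟩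

theorem sccOf_subset_singleton_of_not_target {x : PExpr Act} (h : ∀ w a, ¬ PStep w a x) :
    sccOf x ⊆ {x} := by
  rintro y ⟨-, hyx⟩
  rcases hyx.cases_tail with rfl | ⟨w, -, a, hw⟩
  · rfl
  · exact absurd hw (h w a)

theorem sccOf_subset_singleton_of_no_step {x : PExpr Act} (h : ∀ a z, ¬ PStep x a z) :
    sccOf x ⊆ {x} := by
  rintro y ⟨hxy, -⟩
  rcases hxy.cases_head with rfl | ⟨z, ⟨a, hz⟩, -⟩
  · rfl
  · exact absurd hz (h a z)

theorem sccOf_par (p q : PExpr Act) : sccOf (par p q) = parSet (sccOf p) (sccOf q) := by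
  ext y
  constructor
  · rintro ⟨h, h'⟩
    obtain ⟨u, v, rfl, hu, hv⟩ := h.par_inv
    obtain ⟨u', v', heq, hu', hv'⟩ := h'.par_inv
    obtain ⟨rfl, rfl⟩ := par.inj heq
    exact ⟨u, ⟨hu, hu'⟩, v, ⟨hv, hv'⟩, rfl⟩
  · rintro ⟨u, ⟨hu, hu'⟩, v, ⟨hv, hv'⟩, rfl⟩
    exact ⟨(hu.par_left q).trans (hv.par_right u), (hu'.par_left v).trans (hv'.par_right p)⟩

def NoRestart (p q : PExpr Act) : Prop :=
  ∀ r a z, PReach p r → PTerm r → PStep q a z → ¬ PReach z (seq p q)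

theorem noRestart_of_isStarP_eq_false {q : PExpr Act} (hq : isStarP q = false)
    (p : PExpr Act) : NoRestart p q := fun _ _ _ _ _ hz hzp => by
  have := OC_le_of_pReach hzp
  have := OC_le_of_pStep hz
  rw [OC_seq_of_isStarP_eq_false hq] at *
  omega

theorem sccOf_seq {p q : PExpr Act} (h : NoRestart p q) :
    sccOf (seq p q) = seqSet (sccOf p) q := by
  ext y
  constructor
  · rintro ⟨hy, hy'⟩
    rcases hy.seq_inv with ⟨r, rfl, hr⟩ | ⟨r, a, z, hr, ht, hz, hzy⟩
    · rcases hy'.seq_inv with ⟨r', heq, hr'⟩ | ⟨r', a, z, hr', ht, hz, hzp⟩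
      · obtain ⟨rfl, -⟩ := seq.inj heq
        exact ⟨r, ⟨hr, hr'⟩, rfl⟩
      · exact absurd hzp (h r' a z (hr.trans hr') ht hz)
    · exact absurd (hzy.trans hy') (h r a z hr ht hz)
  · rintro ⟨r, ⟨hr, hr'⟩, rfl⟩
    exact ⟨hr.seq_left q, hr'.seq_left q⟩

theorem seq_mem_seqSet_iff {C₀ : Set (PExpr Act)} {u q : PExpr Act} :
    seq u q ∈ seqSet C₀ q ↔ u ∈ C₀ := by
  simp [seqSet]

theorem par_mem_parSet_iff {C₁ C₂ : Set (PExpr Act)} {u v : PExpr Act} :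
    par u v ∈ parSet C₁ C₂ ↔ u ∈ C₁ ∧ v ∈ C₂ := by
  simp [parSet]

section Exits

variable {C₀ C₁ C₂ : Set (PExpr Act)} {q r u v z : PExpr Act} {a : Act}

theorem mem_extN_seq_cases (he : (a, z) ∈ ExtN (seqSet C₀ q) (seq r q)) :
    (∃ u, z = seq u q ∧ (a, u) ∈ ExtN C₀ r) ∨ (PTerm r ∧ PStep q a z) := by
  obtain ⟨hz, hzC, hzn⟩ := he
  rcases pStep_seq_iff.1 hz with ⟨u, rfl, hu⟩ | h
  · exact .inl ⟨u, rfl, hu, fun huC => hzC (seq_mem_seqSet_iff.2 huC),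
      (pNormed_seq_iff.1 hzn).1⟩
  · exact .inr h

theorem seq_mem_extN_seq (he : (a, u) ∈ ExtN C₀ r) (hq : PNormed q) :
    (a, seq u q) ∈ ExtN (seqSet C₀ q) (seq r q) :=
  ⟨.seql he.1, mt seq_mem_seqSet_iff.1 he.2.1, pNormed_seq_iff.2 ⟨he.2.2, hq⟩⟩

theorem mem_extN_par_cases (hu : u ∈ C₁) (hv : v ∈ C₂)
    (he : (a, z) ∈ ExtN (parSet C₁ C₂) (par u v)) :
    (∃ u', z = par u' v ∧ (a, u') ∈ ExtN C₁ u) ∨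
      ∃ v', z = par u v' ∧ (a, v') ∈ ExtN C₂ v := by
  obtain ⟨hz, hzC, hzn⟩ := he
  rcases pStep_par_iff.1 hz with ⟨u', rfl, hu'⟩ | ⟨v', rfl, hv'⟩
  · exact .inl ⟨u', rfl, hu', fun h => hzC (par_mem_parSet_iff.2 ⟨h, hv⟩),
      (pNormed_par_iff.1 hzn).1⟩
  · exact .inr ⟨v', rfl, hv', fun h => hzC (par_mem_parSet_iff.2 ⟨hu, h⟩),
      (pNormed_par_iff.1 hzn).2⟩

theorem par_mem_extN_par_left {u' : PExpr Act} (he : (a, u') ∈ ExtN C₁ u) (hv : PNormed v) :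
    (a, par u' v) ∈ ExtN (parSet C₁ C₂) (par u v) :=
  ⟨.parl he.1, fun h => he.2.1 (par_mem_parSet_iff.1 h).1, pNormed_par_iff.2 ⟨he.2.2, hv⟩⟩

theorem par_mem_extN_par_right {v' : PExpr Act} (he : (a, v') ∈ ExtN C₂ v) (hu : PNormed u) :
    (a, par u v') ∈ ExtN (parSet C₁ C₂) (par u v) :=
  ⟨.parr he.1, fun h => he.2.1 (par_mem_parSet_iff.1 h).2, pNormed_par_iff.2 ⟨hu, he.2.2⟩⟩

end Exits

structure IsMaximalExit (C : Set (PExpr Act)) (s : PExpr Act) : Prop where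
  mem : s ∈ C
  normed : PNormed s
  term_of_term : ∀ t ∈ C, PTerm t → PTerm s
  covers : ∀ s' ∈ C, ∀ e' ∈ ExtN C s', ∃ e ∈ ExtN C s, ExitEquiv e e'

namespace IsMaximalExit

variable {C C₀ C₁ C₂ : Set (PExpr Act)} {s q r u v : PExpr Act}

theorem aliveExit (h : IsMaximalExit C s) {s' : PExpr Act} (hs' : AliveExit C s') :
    AliveExit C s := by
  refine ⟨h.mem, ?_⟩
  rcases hs'.2 with ht | ⟨e', he'⟩
  · exact .inl (h.term_of_term s' hs'.1 ht)
  · obtain ⟨e, he, -⟩ := h.covers s' hs'.1 e' he'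
    exact .inr ⟨e, he⟩

theorem of_subset_singleton {x : PExpr Act} (hx : x ∈ C) (hC : C ⊆ {x}) (hn : PNormed x) :
    IsMaximalExit C x where
  mem := hx
  normed := hn
  term_of_term t ht htt := hC ht ▸ htt
  covers s' hs' e he := by
    obtain rfl := hC hs'
    exact ⟨e, he, rfl, .refl _⟩

theorem of_no_exits (hs : s ∈ C) (ht : PTerm s) (h : ∀ s' ∈ C, ∀ e, e ∉ ExtN C s') :
    IsMaximalExit C s where
  mem := hs
  normed := .of_term ht
  term_of_term _ _ _ := ht
  covers s' hs' e he := absurd he (h s' hs' e)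

theorem seq (hr : IsMaximalExit C₀ r) (hq : PNormed q) :
    IsMaximalExit (seqSet C₀ q) (PExpr.seq r q) where
  mem := seq_mem_seqSet_iff.2 hr.mem
  normed := pNormed_seq_iff.2 ⟨hr.normed, hq⟩
  term_of_term := by
    rintro _ ⟨r', hr', rfl⟩ ht
    obtain ⟨ht₁, ht₂⟩ := pTerm_seq_iff.1 ht
    exact .seq (hr.term_of_term r' hr' ht₁) ht₂
  covers := by
    rintro _ ⟨r', hr', rfl⟩ ⟨a, z⟩ he
    rcases mem_extN_seq_cases he with ⟨u, rfl, hu⟩ | ⟨ht, hz⟩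
    · obtain ⟨⟨a', u'⟩, hu', heq, hsame⟩ := hr.covers r' hr' _ hu
      exact ⟨(a', PExpr.seq u' q), seq_mem_extN_seq hu' hq, heq, hsame.seq_left q⟩
    · exact ⟨(a, z), ⟨.seqr (hr.term_of_term r' hr' ht) hz, he.2⟩, rfl, .refl z⟩

theorem par (hu : IsMaximalExit C₁ u) (hv : IsMaximalExit C₂ v) (hC₁ : IsSCC C₁)
    (hC₂ : IsSCC C₂) : IsMaximalExit (parSet C₁ C₂) (par u v) where
  mem := par_mem_parSet_iff.2 ⟨hu.mem, hv.mem⟩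
  normed := pNormed_par_iff.2 ⟨hu.normed, hv.normed⟩
  term_of_term := by
    rintro _ ⟨u', hu', v', hv', rfl⟩ ht
    obtain ⟨ht₁, ht₂⟩ := pTerm_par_iff.1 ht
    exact .par (hu.term_of_term u' hu' ht₁) (hv.term_of_term v' hv' ht₂)
  covers := by
    rintro _ ⟨u', hu', v', hv', rfl⟩ ⟨a, z⟩ he
    rcases mem_extN_par_cases hu' hv' he with ⟨u'', rfl, hu''⟩ | ⟨v'', rfl, hv''⟩
    · obtain ⟨⟨a', w⟩, hw, heq, hsame⟩ := hu.covers u' hu' _ hu''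
      exact ⟨(a', PExpr.par w v), par_mem_extN_par_left hw hv.normed, heq,
        hsame.par (hC₂.sameSCC hv.mem hv')⟩
    · obtain ⟨⟨a', w⟩, hw, heq, hsame⟩ := hv.covers v' hv' _ hv''
      exact ⟨(a', PExpr.par u w), par_mem_extN_par_right hw hu.normed, heq,
        (hC₁.sameSCC hu.mem hu').par hsame⟩

theorem of_restart {p t z : PExpr Act} {a : Act} (hr : PReach p r) (ht : PTerm r)
    (hz : PStep (star t) a z) (hzp : PReach z (PExpr.seq p (star t))) :
    IsMaximalExit (sccOf (PExpr.seq p (star t))) (PExpr.seq r (star t)) := by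
  have hrC : PExpr.seq r (star t) ∈ sccOf (PExpr.seq p (star t)) :=
    ⟨hr.seq_left _, (PReach.single (.seqr ht hz)).trans hzp⟩
  refine of_no_exits hrC (.seq ht .star) ?_
  rintro s' ⟨hs', -⟩ ⟨b, y⟩ ⟨hy, hyC, hyn⟩
  obtain ⟨t₀, rfl, ht₀⟩ := pStep_star_iff.1 hz
  have hpy : PReach (PExpr.seq p (star t)) y := hs'.trans (.single hy)
  obtain ⟨w, rfl⟩ := hpy.seq_star_inv
  exact hyC ⟨hpy, (hyn.reach_restart ht₀).trans hzp⟩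

end IsMaximalExit

theorem exists_isMaximalExit_sccOf (x : PExpr Act) (hx : PNormed x) :
    ∃ s, IsMaximalExit (sccOf x) s := by
  induction x with
  | seq p q ihp =>
    obtain ⟨hp, hq⟩ := pNormed_seq_iff.1 hx
    by_cases hNR : NoRestart p q
    · obtain ⟨r, hr⟩ := ihp hp
      rw [sccOf_seq hNR]
      exact ⟨_, hr.seq hq⟩
    · cases q with
      | star t =>
        simp only [NoRestart, not_forall, not_not] at hNR
        obtain ⟨r, a, z, hr, ht, hz, hzp⟩ := hNR
        exact ⟨_, .of_restart hr ht hz hzp⟩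
      | _ => exact absurd (noRestart_of_isStarP_eq_false rfl p) hNR
  | par p q ihp ihq =>
    obtain ⟨hp, hq⟩ := pNormed_par_iff.1 hx
    obtain ⟨u, hu⟩ := ihp hp
    obtain ⟨v, hv⟩ := ihq hq
    rw [sccOf_par]
    exact ⟨_, hu.par hv (isSCC_sccOf p) (isSCC_sccOf q)⟩
  | emp =>
    exact ⟨_, .of_subset_singleton (mem_sccOf_self _)
      (sccOf_subset_singleton_of_no_step fun _ _ h => nomatch h) hx⟩
  | _ =>
    refine ⟨_, .of_subset_singleton (mem_sccOf_self _)
      (sccOf_subset_singleton_of_not_target fun _ _ h => ?_) hx⟩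
    rcases h.target_shape with h | ⟨_, _, h⟩ | ⟨_, _, h⟩ <;> cases h

theorem maximal_alive_exit_general {Act : Type} {C : Set (PExpr Act)}
    (hC : IsSCC C) (ha : ∃ s, AliveExit C s) :
    ∃ s, AliveExit C s ∧
      ∀ s', AliveExit C s' → ∀ e' ∈ ExtN C s', ∃ e ∈ ExtN C s, ExitEquiv e e' := by
  obtain ⟨s₀, hs₀⟩ := ha
  obtain ⟨s, hs⟩ := exists_isMaximalExit_sccOf s₀ hs₀.normed
  rw [← hC.eq_sccOf hs₀.1] at hs
  exact ⟨s, hs.aliveExit hs₀, fun s' hs' => hs.covers s' hs'.1⟩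

/-- Every SCC in PA*01 that has an alive exit state has a maximal
alive exit state: an alive exit state `s` such that for every alive exit state
`s'` and every `e' ∈ Extⁿ(s')` there is `e ∈ Extⁿ(s)` with `e ∼ e'`. -/
theorem maximal_alive_exit {Act : Type} [Nonempty Act] {C : Set (PExpr Act)}
    (hC : IsSCC C) (ha : ∃ s, AliveExit C s) :
    ∃ s, AliveExit C s ∧
      ∀ s', AliveExit C s' → ∀ e' ∈ ExtN C s', ∃ e ∈ ExtN C s, ExitEquiv e e' :=
  maximal_alive_exit_general hC ha
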